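/- arXiv:1801.07148 — 3 statements merged into one kernel-verified Lean document; each statement's English description precedes it below -/
import Mathlib

section
/- Let ν be a nonnegative finite symmetric Borel measure on ℝ^N, and let φ : ℝ → ℝ be nondecreasing and globally Lipschitz with Lipschitz constant L_φ satisfying the CFL condition L_φ · ν(ℝ^N) ≤ 1. If ψ, ψ̂ ∈ L^∞(ℝ^N) and ψ ≤ ψ̂ Lebesgue-a.e., then T^exp[ψ] ≤ T^exp[ψ̂] Lebesgue-a.e. -/
/-!
Write `m := ν(ℝ^N)`. Wherever the integral in `L^ν` splits,
`T^exp[ψ](x) = (ψ(x) - m φ(ψ(x))) + ∫ φ(ψ(x + z)) dν(z)`.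
The first summand is a nondecreasing function of `ψ(x)`: `φ` is nondecreasing with slope at most
`L_φ`, and `L_φ m ≤ 1`. The second is monotone in `ψ` as soon as `ψ(x + z) ≤ ψ'(x + z)` for
`ν`-a.e. `z`, which holds for a.e. `x`: translation invariance of Lebesgue measure makes
`(x, z) ↦ x + z` quasi-measure-preserving from `volume × ν` to `volume`. The same fact makes
`z ↦ φ(ψ(x + z))` bounded and measurable `ν`-a.e. for a.e. `x`, so the splitting is legitimate.
-/

open MeasureTheory ENNReal
open scoped ENNReal NNReal

noncomputable section

/-- The zero-order Lévy operator `L^ν[ψ](x) := ∫ (ψ(x+z) − ψ(x)) dν(z)`. -/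
def Lnu {N : ℕ} (ν : Measure (EuclideanSpace ℝ (Fin N)))
    (ψ : EuclideanSpace ℝ (Fin N) → ℝ) (x : EuclideanSpace ℝ (Fin N)) : ℝ :=
  ∫ z, (ψ (x + z) - ψ x) ∂ν

/-- The explicit-step operator `T^exp[ψ](x) := ψ(x) + L^ν[φ∘ψ](x)`. -/
def Texp {N : ℕ} (ν : Measure (EuclideanSpace ℝ (Fin N))) (φ : ℝ → ℝ)
    (ψ : EuclideanSpace ℝ (Fin N) → ℝ) (x : EuclideanSpace ℝ (Fin N)) : ℝ :=
  ψ x + Lnu ν (fun y => φ (ψ y)) x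

open Filter

theorem MeasureTheory.MemLp.exists_ae_norm_le {α E : Type*} [MeasurableSpace α]
    [NormedAddCommGroup E] {μ : Measure α} {f : α → E} (hf : MemLp f ⊤ μ) :
    ∃ C : ℝ, ∀ᵐ x ∂μ, ‖f x‖ ≤ C := by
  have hfin : eLpNormEssSup f μ < ⊤ := eLpNorm_exponent_top (f := f) ▸ hf.2
  obtain ⟨C, hC⟩ := eLpNormEssSup_lt_top_iff_isBoundedUnder.mp hfin
  exact ⟨C, (eventually_map.mp hC).mono fun _ hx ↦ by exact_mod_cast hx⟩

section Translation

variable {G : Type*} [MeasurableSpace G] [AddCommGroup G] [MeasurableAdd₂ G]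
  {μ ν : Measure G} [SFinite μ] [SFinite ν] [μ.IsAddLeftInvariant]

theorem ae_ae_add_of_ae {P : G → Prop} (h : ∀ᵐ y ∂μ, P y) :
    ∀ᵐ x ∂μ, ∀ᵐ z ∂ν, P (x + z) := by
  have hprod : ∀ᵐ p ∂μ.prod ν, P (p.2 + p.1) := (quasiMeasurePreserving_add_swap μ ν).ae h
  simpa only [add_comm] using Measure.ae_ae_of_ae_prod hprod

theorem MeasureTheory.MemLp.ae_integrable_comp_add {E : Type*} [NormedAddCommGroup E]
    [IsFiniteMeasure ν] {f : G → E} (hf : MemLp f ⊤ μ) :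
    ∀ᵐ x ∂μ, Integrable (fun z ↦ f (x + z)) ν := by
  obtain ⟨C, hC⟩ := hf.exists_ae_norm_le
  obtain ⟨g, hg, hfg⟩ := hf.1
  filter_upwards [ae_ae_add_of_ae (ν := ν) (hC.and hfg)] with x hx
  have hmeas : AEStronglyMeasurable (fun z ↦ f (x + z)) ν :=
    (hg.comp_measurable (measurable_const_add x)).aestronglyMeasurable.congr
      (hx.mono fun _ hz ↦ hz.2.symm)
  exact Integrable.of_bound hmeas C (hx.mono fun _ hz ↦ hz.1)

end Translation

theorem LipschitzWith.comp_memLp_top {α E F : Type*} [MeasurableSpace α] [NormedAddCommGroup E]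
    [NormedAddCommGroup F] {μ : Measure α} {φ : E → F} {K : NNReal} (hφ : LipschitzWith K φ)
    {f : α → E} (hf : MemLp f ⊤ μ) : MemLp (fun x ↦ φ (f x)) ⊤ μ := by
  have hshift : MemLp ((fun y ↦ φ y - φ 0) ∘ f) ⊤ μ :=
    (hφ.sub (LipschitzWith.const (φ 0))).comp_memLp (sub_self _) hf
  convert hshift.add (memLp_top_const (φ 0)) using 1
  ext x
  simp

theorem Lnu_eq_integral_sub {N : ℕ} {ν : Measure (EuclideanSpace ℝ (Fin N))} [IsFiniteMeasure ν]
    {ψ : EuclideanSpace ℝ (Fin N) → ℝ} {x : EuclideanSpace ℝ (Fin N)}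
    (hψ : Integrable (fun z ↦ ψ (x + z)) ν) :
    Lnu ν ψ x = ∫ z, ψ (x + z) ∂ν - ν.real Set.univ * ψ x := by
  rw [Lnu, integral_sub hψ (integrable_const _), integral_const, smul_eq_mul]

theorem monotone_sub_mul_of_lipschitzWith {φ : ℝ → ℝ} {L : NNReal} (hmono : Monotone φ)
    (hLip : LipschitzWith L φ) {m : ℝ} (hm : 0 ≤ m) (hLm : L * m ≤ 1) :
    Monotone fun s ↦ s - m * φ s := by
  intro a b hab
  have hslope : φ b - φ a ≤ L * (b - a) := by
    have := hLip.dist_le_mul b a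
    rwa [Real.dist_eq, Real.dist_eq, abs_of_nonneg (sub_nonneg.mpr (hmono hab)),
      abs_of_nonneg (sub_nonneg.mpr hab)] at this
  nlinarith [mul_le_mul_of_nonneg_left hslope hm,
    mul_nonneg (sub_nonneg.mpr hLm) (sub_nonneg.mpr hab)]

theorem stmt2_general {N : ℕ}
    (ν : Measure (EuclideanSpace ℝ (Fin N))) [IsFiniteMeasure ν]
    (φ : ℝ → ℝ) (hmono : Monotone φ)
    (L : ℝ≥0) (hLip : LipschitzWith L φ)
    (hCFL : (L : ℝ≥0∞) * ν Set.univ ≤ 1)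
    (ψ ψ' : EuclideanSpace ℝ (Fin N) → ℝ)
    (hψ : MemLp ψ ∞ volume) (hψ' : MemLp ψ' ∞ volume)
    (hle : ∀ᵐ x ∂(volume : Measure (EuclideanSpace ℝ (Fin N))), ψ x ≤ ψ' x) :
    ∀ᵐ x ∂(volume : Measure (EuclideanSpace ℝ (Fin N))),
      Texp ν φ ψ x ≤ Texp ν φ ψ' x := by
  have hCFL' : (L : ℝ) * ν.real Set.univ ≤ 1 := by
    simpa [Measure.real] using ENNReal.toReal_mono ENNReal.one_ne_top hCFL
  filter_upwards [hle, ae_ae_add_of_ae (ν := ν) hle,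
    (hLip.comp_memLp_top hψ).ae_integrable_comp_add (ν := ν),
    (hLip.comp_memLp_top hψ').ae_integrable_comp_add (ν := ν)] with x hx hshift hint hint'
  have hfirst : ψ x - ν.real Set.univ * φ (ψ x) ≤ ψ' x - ν.real Set.univ * φ (ψ' x) :=
    monotone_sub_mul_of_lipschitzWith hmono hLip measureReal_nonneg hCFL' hx
  have hsecond : ∫ z, φ (ψ (x + z)) ∂ν ≤ ∫ z, φ (ψ' (x + z)) ∂ν :=
    integral_mono_ae hint hint' (hshift.mono fun _ hz ↦ hmono hz)
  rw [Texp, Texp, Lnu_eq_integral_sub hint, Lnu_eq_integral_sub hint']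
  linarith

theorem stmt2 {N : ℕ} (hN : 1 ≤ N)
    (ν : Measure (EuclideanSpace ℝ (Fin N))) [IsFiniteMeasure ν]
    (hsym : ν.map (fun z => -z) = ν)
    (φ : ℝ → ℝ) (hmono : Monotone φ)
    (L : ℝ≥0) (hLip : LipschitzWith L φ)
    (hCFL : (L : ℝ≥0∞) * ν Set.univ ≤ 1)
    (ψ ψ' : EuclideanSpace ℝ (Fin N) → ℝ)
    (hψ : MemLp ψ ∞ volume) (hψ' : MemLp ψ' ∞ volume)
    (hle : ∀ᵐ x ∂(volume : Measure (EuclideanSpace ℝ (Fin N))), ψ x ≤ ψ' x) :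
    ∀ᵐ x ∂(volume : Measure (EuclideanSpace ℝ (Fin N))),
      Texp ν φ ψ x ≤ Texp ν φ ψ' x :=
  stmt2_general ν φ hmono L hLip hCFL ψ ψ' hψ hψ' hle
end
end

section
/- Let ν be a nonnegative finite symmetric Borel measure on ℝ^N, and let φ : ℝ → ℝ be nondecreasing, globally Lipschitz, with φ(0) = 0. Let w, ŵ, ρ, ρ̂ ∈ L^1(ℝ^N). (a) If w is an a.e.-subsolution of (EP) with right-hand side ρ, ŵ is an a.e.-supersolution of (EP) with right-hand side ρ̂, and ρ ≤ ρ̂ a.e., then w ≤ ŵ a.e. (b) If w is an a.e.-solution of (EP) with right-hand side ρ, then ‖w‖_{L^1(ℝ^N)} ≤ ‖ρ‖_{L^1(ℝ^N)}. -/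
open MeasureTheory ENNReal
open scoped ENNReal NNReal

noncomputable section

/-!
Test the equation against a bounded function `s` of the solution. The nonlocal term then has a
sign: if `s(x) g(y) ≤ s(y) g(y)` for all `x, y` (as happens for `g = φ ∘ w` and `s` a
nondecreasing function of `w`), then `s L^ν[g] ≤ L^ν[s g]` pointwise, while `∫ L^ν[h] = 0` for
every integrable `h` because Lebesgue measure is translation invariant. Taking `s = 𝟙{w > ŵ}` in
the difference of the two inequalities gives `∫ (w - ŵ)⁺ ≤ 0`; taking `s = ±1` according to the
sign of `w` gives `∫ |w| ≤ ∫ |ρ|`.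
-/

open Set

section Translation

variable {G : Type*} [MeasurableSpace G] [AddCommGroup G] [MeasurableAdd₂ G]
  {μ : Measure G} [SFinite μ] [μ.IsAddLeftInvariant] (ν : Measure G)

theorem quasiMeasurePreserving_add_prod [SFinite ν] :
    Measure.QuasiMeasurePreserving (fun p : G × G => p.1 + p.2) (μ.prod ν) μ := by
  simpa only [add_comm] using quasiMeasurePreserving_add_swap μ ν

variable {E : Type*} [NormedAddCommGroup E] {g : G → E}

theorem MeasureTheory.Integrable.comp_add_prod [IsFiniteMeasure ν] (hg : Integrable g μ) :
    Integrable (fun p : G × G => g (p.1 + p.2)) (μ.prod ν) := by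
  refine (integrable_prod_iff'
    (hg.1.comp_quasiMeasurePreserving (quasiMeasurePreserving_add_prod ν))).2
    ⟨ae_of_all _ fun z => hg.comp_add_right z, ?_⟩
  have hnorm (z : G) : ∫ x, ‖g (x + z)‖ ∂μ = ∫ x, ‖g x‖ ∂μ :=
    integral_add_right_eq_self (fun x => ‖g x‖) z
  simp only [Function.comp_apply, hnorm]
  exact integrable_const _

theorem integral_prod_comp_add [NormedSpace ℝ E] [CompleteSpace E] [IsFiniteMeasure ν]
    (hg : Integrable g μ) :
    ∫ p, g (p.1 + p.2) ∂μ.prod ν = ν.real univ • ∫ x, g x ∂μ := by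
  rw [integral_prod_symm _ (hg.comp_add_prod ν)]
  simp only [integral_add_right_eq_self g]
  exact integral_const _

end Translation

section Levy

variable {N : ℕ} {μ : Measure (EuclideanSpace ℝ (Fin N))} [SFinite μ] [μ.IsAddLeftInvariant]
  (ν : Measure (EuclideanSpace ℝ (Fin N))) {f g s u : EuclideanSpace ℝ (Fin N) → ℝ}

theorem integrable_Lnu_integrand [IsFiniteMeasure ν] (hg : Integrable g μ) :
    Integrable (fun p : EuclideanSpace ℝ (Fin N) × EuclideanSpace ℝ (Fin N) =>
      g (p.1 + p.2) - g p.1) (μ.prod ν) :=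
  (hg.comp_add_prod ν).sub (hg.comp_fst ν)

theorem integrable_Lnu [IsFiniteMeasure ν] (hg : Integrable g μ) : Integrable (Lnu ν g) μ :=
  (integrable_Lnu_integrand ν hg).integral_prod_left

theorem integral_Lnu [IsFiniteMeasure ν] (hg : Integrable g μ) : ∫ x, Lnu ν g x ∂μ = 0 := by
  simp only [Lnu]
  rw [← integral_prod _ (integrable_Lnu_integrand ν hg),
    integral_sub (hg.comp_add_prod ν) (hg.comp_fst ν), integral_prod_comp_add ν hg,
    integral_fun_fst, sub_self]

theorem ae_integrable_Lnu_integrand [IsFiniteMeasure ν] (hg : Integrable g μ) :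
    ∀ᵐ x ∂μ, Integrable (fun z => g (x + z) - g x) ν :=
  (integrable_Lnu_integrand ν hg).prod_right_ae

theorem Lnu_sub_ae [IsFiniteMeasure ν] (hf : Integrable f μ) (hg : Integrable g μ) :
    Lnu ν (fun y => f y - g y) =ᵐ[μ] fun x => Lnu ν f x - Lnu ν g x := by
  filter_upwards [ae_integrable_Lnu_integrand ν hf, ae_integrable_Lnu_integrand ν hg]
    with x hfx hgx
  simp only [Lnu]
  rw [← integral_sub hfx hgx]
  congr 1 with z
  ring

theorem mul_Lnu_le_Lnu_mul {x : EuclideanSpace ℝ (Fin N)} (hsg : ∀ y, s x * g y ≤ s y * g y)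
    (hg : Integrable (fun z => g (x + z) - g x) ν)
    (hsgi : Integrable (fun z => s (x + z) * g (x + z) - s x * g x) ν) :
    s x * Lnu ν g x ≤ Lnu ν (fun y => s y * g y) x := by
  simp only [Lnu]
  rw [← integral_const_mul]
  refine integral_mono (hg.const_mul _) hsgi fun z => ?_
  linarith [hsg (x + z), mul_sub (s x) (g (x + z)) (g x)]

theorem integral_mul_Lnu_nonpos [IsFiniteMeasure ν] (hg : Integrable g μ)
    (hs : AEStronglyMeasurable s μ) (hs1 : ∀ x, |s x| ≤ 1)
    (hsg : ∀ x y, s x * g y ≤ s y * g y) :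
    ∫ x, s x * Lnu ν g x ∂μ ≤ 0 := by
  have hsgi : Integrable (fun y => s y * g y) μ := hg.bdd_mul hs (ae_of_all _ hs1)
  calc ∫ x, s x * Lnu ν g x ∂μ ≤ ∫ x, Lnu ν (fun y => s y * g y) x ∂μ :=
        integral_mono_ae ((integrable_Lnu ν hg).bdd_mul hs (ae_of_all _ hs1))
          (integrable_Lnu ν hsgi)
          (by filter_upwards [ae_integrable_Lnu_integrand ν hg,
                ae_integrable_Lnu_integrand ν hsgi] with x hgx hsgx
              exact mul_Lnu_le_Lnu_mul ν (hsg x) hgx hsgx)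
    _ = 0 := integral_Lnu ν hsgi

theorem integral_mul_le_of_mul_le_add_mul_Lnu [IsFiniteMeasure ν]
    (hu : Integrable u μ) (hf : Integrable f μ) (hg : Integrable g μ)
    (hs : AEStronglyMeasurable s μ) (hs1 : ∀ x, |s x| ≤ 1)
    (hsg : ∀ x y, s x * g y ≤ s y * g y)
    (h : ∀ᵐ x ∂μ, s x * u x ≤ s x * f x + s x * Lnu ν g x) :
    ∫ x, s x * u x ∂μ ≤ ∫ x, s x * f x ∂μ := by
  have hmul {v : EuclideanSpace ℝ (Fin N) → ℝ} (hv : Integrable v μ) :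
      Integrable (fun x => s x * v x) μ :=
    hv.bdd_mul hs (ae_of_all _ hs1)
  calc ∫ x, s x * u x ∂μ ≤ ∫ x, (s x * f x + s x * Lnu ν g x) ∂μ :=
        integral_mono_ae (hmul hu) ((hmul hf).add (hmul (integrable_Lnu ν hg))) h
    _ = ∫ x, s x * f x ∂μ + ∫ x, s x * Lnu ν g x ∂μ :=
        integral_add (hmul hf) (hmul (integrable_Lnu ν hg))
    _ ≤ ∫ x, s x * f x ∂μ := add_le_of_nonpos_right (integral_mul_Lnu_nonpos ν hg hs hs1 hsg)

end Levy

theorem LipschitzWith.integrable_comp {α E F : Type*} [MeasurableSpace α] {μ : Measure α}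
    [NormedAddCommGroup E] [NormedAddCommGroup F] {K : ℝ≥0} {φ : E → F}
    (hφ : LipschitzWith K φ) (hφ0 : φ 0 = 0) {w : α → E} (hw : Integrable w μ) :
    Integrable (fun x => φ (w x)) μ :=
  memLp_one_iff_integrable.1 (hφ.comp_memLp hφ0 (memLp_one_iff_integrable.2 hw))

theorem ae_nonpos_of_integral_max_zero_nonpos {α : Type*} [MeasurableSpace α] {μ : Measure α}
    {u : α → ℝ} (hu : Integrable u μ) (h : ∫ x, max (u x) 0 ∂μ ≤ 0) : ∀ᵐ x ∂μ, u x ≤ 0 := by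
  have hzero : (fun x => max (u x) 0) =ᵐ[μ] 0 :=
    (integral_eq_zero_iff_of_nonneg (fun x => le_max_right _ _) hu.pos_part).1
      (le_antisymm h (integral_nonneg fun x => le_max_right _ _))
  filter_upwards [hzero] with x hx
  exact (le_max_left _ _).trans_eq hx

theorem mul_sub_le_ite_mul_sub {φ : ℝ → ℝ} (hφ : Monotone φ) {a b c : ℝ} (hc0 : 0 ≤ c)
    (hc1 : c ≤ 1) : c * (φ a - φ b) ≤ (if 0 < a - b then 1 else 0) * (φ a - φ b) := by
  split_ifs with h
  · nlinarith [hφ (sub_pos.1 h).le]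
  · nlinarith [hφ (sub_nonpos.1 (not_lt.1 h))]

theorem mul_le_ite_mul {φ : ℝ → ℝ} (hφ : Monotone φ) (hφ0 : φ 0 = 0) {a c : ℝ} (hc : |c| ≤ 1) :
    c * φ a ≤ (if 0 ≤ a then 1 else -1) * φ a := by
  obtain ⟨hc₁, hc₂⟩ := abs_le.1 hc
  split_ifs with h
  · nlinarith [hφ0 ▸ hφ h]
  · nlinarith [hφ0 ▸ hφ (not_le.1 h).le]

section Comparison

variable {N : ℕ} {μ : Measure (EuclideanSpace ℝ (Fin N))} [SFinite μ] [μ.IsAddLeftInvariant]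
  (ν : Measure (EuclideanSpace ℝ (Fin N))) [IsFiniteMeasure ν]
  {φ : ℝ → ℝ} {L : ℝ≥0} {w wh ρ ρ' : EuclideanSpace ℝ (Fin N) → ℝ}

theorem ae_le_of_subsolution_of_supersolution (hφ : Monotone φ) (hLip : LipschitzWith L φ)
    (hφ0 : φ 0 = 0) (hw : Integrable w μ) (hwh : Integrable wh μ)
    (hsub : ∀ᵐ x ∂μ, w x - Lnu ν (fun y => φ (w y)) x ≤ ρ x)
    (hsup : ∀ᵐ x ∂μ, ρ' x ≤ wh x - Lnu ν (fun y => φ (wh y)) x)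
    (hle : ∀ᵐ x ∂μ, ρ x ≤ ρ' x) :
    ∀ᵐ x ∂μ, w x ≤ wh x := by
  let s x : ℝ := if 0 < w x - wh x then 1 else 0
  have hs : AEStronglyMeasurable s μ :=
    ((measurable_const.ite measurableSet_Ioi measurable_const).comp_aemeasurable
      (hw.1.aemeasurable.sub hwh.1.aemeasurable)).aestronglyMeasurable
  have hs01 (x) : 0 ≤ s x ∧ s x ≤ 1 := by
    simp only [s]
    split_ifs <;> norm_num
  have hφw := hLip.integrable_comp hφ0 hw
  have hφwh := hLip.integrable_comp hφ0 hwh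
  have hdiff : ∀ᵐ x ∂μ, w x - wh x ≤ Lnu ν (fun y => φ (w y) - φ (wh y)) x := by
    filter_upwards [hsub, hsup, hle, Lnu_sub_ae ν hφw hφwh] with x h₁ h₂ h₃ h₄
    rw [h₄]
    linarith
  have hint : ∫ x, s x * (w x - wh x) ∂μ ≤ ∫ x, s x * 0 ∂μ :=
    integral_mul_le_of_mul_le_add_mul_Lnu ν (g := fun y => φ (w y) - φ (wh y)) (hw.sub hwh)
      (integrable_zero _ _ _)
      (hφw.sub hφwh) hs (fun x => abs_le.2 ⟨by linarith [hs01 x], (hs01 x).2⟩)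
      (fun x _ => mul_sub_le_ite_mul_sub hφ (hs01 x).1 (hs01 x).2)
      (by filter_upwards [hdiff] with x hx
          simpa using mul_le_mul_of_nonneg_left hx (hs01 x).1)
  have hposPart (x) : s x * (w x - wh x) = max (w x - wh x) 0 := by
    simp only [s]
    split_ifs with h
    · simp [h.le]
    · simp [not_lt.1 h]
  simp only [hposPart, mul_zero, integral_zero] at hint
  filter_upwards [ae_nonpos_of_integral_max_zero_nonpos (hw.sub hwh) hint] with x hx
  exact sub_nonpos.1 hx

theorem eLpNorm_one_le_of_solution (hφ : Monotone φ) (hLip : LipschitzWith L φ)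
    (hφ0 : φ 0 = 0) (hw : Integrable w μ) (hρ : Integrable ρ μ)
    (heq : ∀ᵐ x ∂μ, w x - Lnu ν (fun y => φ (w y)) x = ρ x) :
    eLpNorm w 1 μ ≤ eLpNorm ρ 1 μ := by
  let s x : ℝ := if 0 ≤ w x then 1 else -1
  have hs : AEStronglyMeasurable s μ :=
    ((measurable_const.ite measurableSet_Ici measurable_const).comp_aemeasurable
      hw.1.aemeasurable).aestronglyMeasurable
  have hs1 (x) : |s x| ≤ 1 := by
    simp only [s]
    split_ifs <;> norm_num
  have hsw (x) : s x * w x = ‖w x‖ := by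
    simp only [s, Real.norm_eq_abs]
    split_ifs with h
    · simp [abs_of_nonneg h]
    · simp [abs_of_neg (not_le.1 h)]
  have hint : ∫ x, ‖w x‖ ∂μ ≤ ∫ x, ‖ρ x‖ ∂μ :=
    calc ∫ x, ‖w x‖ ∂μ = ∫ x, s x * w x ∂μ := by simp only [hsw]
      _ ≤ ∫ x, s x * ρ x ∂μ :=
        integral_mul_le_of_mul_le_add_mul_Lnu ν hw hρ (hLip.integrable_comp hφ0 hw) hs hs1
          (fun x _ => mul_le_ite_mul hφ hφ0 (hs1 x))
          (by filter_upwards [heq] with x hx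
              rw [← mul_add, ← hx, sub_add_cancel])
      _ ≤ ∫ x, ‖ρ x‖ ∂μ :=
        integral_mono (hρ.bdd_mul hs (ae_of_all _ hs1)) hρ.norm fun x =>
          (Real.le_norm_self _).trans <| by
            rw [norm_mul, Real.norm_eq_abs (s x)]
            exact mul_le_of_le_one_left (norm_nonneg _) (hs1 x)
  rw [eLpNorm_one_eq_lintegral_enorm, eLpNorm_one_eq_lintegral_enorm,
    ← ofReal_integral_norm_eq_lintegral_enorm hw, ← ofReal_integral_norm_eq_lintegral_enorm hρ]
  exact ENNReal.ofReal_le_ofReal hint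

end Comparison

theorem stmt6_general {N : ℕ}
    (ν : Measure (EuclideanSpace ℝ (Fin N))) [IsFiniteMeasure ν]
    (φ : ℝ → ℝ) (hmono : Monotone φ)
    (L : ℝ≥0) (hLip : LipschitzWith L φ) (hφ0 : φ 0 = 0)
    (w wh ρ ρ' : EuclideanSpace ℝ (Fin N) → ℝ)
    (hw : Integrable w volume) (hwh : Integrable wh volume)
    (hρ : Integrable ρ volume) :
    -- (a) Comparison
    ((∀ᵐ x ∂(volume : Measure (EuclideanSpace ℝ (Fin N))),
        w x - Lnu ν (fun y => φ (w y)) x ≤ ρ x) →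
     (∀ᵐ x ∂(volume : Measure (EuclideanSpace ℝ (Fin N))),
        ρ' x ≤ wh x - Lnu ν (fun y => φ (wh y)) x) →
     (∀ᵐ x ∂(volume : Measure (EuclideanSpace ℝ (Fin N))), ρ x ≤ ρ' x) →
     (∀ᵐ x ∂(volume : Measure (EuclideanSpace ℝ (Fin N))), w x ≤ wh x)) ∧
    -- (b) L¹-bound
    ((∀ᵐ x ∂(volume : Measure (EuclideanSpace ℝ (Fin N))),
        w x - Lnu ν (fun y => φ (w y)) x = ρ x) →
     eLpNorm w 1 volume ≤ eLpNorm ρ 1 volume) :=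
  ⟨fun hsub hsup hle =>
      ae_le_of_subsolution_of_supersolution ν hmono hLip hφ0 hw hwh hsub hsup hle,
    eLpNorm_one_le_of_solution ν hmono hLip hφ0 hw hρ⟩

theorem stmt6 {N : ℕ} (hN : 1 ≤ N)
    (ν : Measure (EuclideanSpace ℝ (Fin N))) [IsFiniteMeasure ν]
    (hsym : ν.map (fun z => -z) = ν)
    (φ : ℝ → ℝ) (hmono : Monotone φ)
    (L : ℝ≥0) (hLip : LipschitzWith L φ) (hφ0 : φ 0 = 0)
    (w wh ρ ρ' : EuclideanSpace ℝ (Fin N) → ℝ)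
    (hw : Integrable w volume) (hwh : Integrable wh volume)
    (hρ : Integrable ρ volume) (hρ' : Integrable ρ' volume) :
    -- (a) Comparison
    ((∀ᵐ x ∂(volume : Measure (EuclideanSpace ℝ (Fin N))),
        w x - Lnu ν (fun y => φ (w y)) x ≤ ρ x) →
     (∀ᵐ x ∂(volume : Measure (EuclideanSpace ℝ (Fin N))),
        ρ' x ≤ wh x - Lnu ν (fun y => φ (wh y)) x) →
     (∀ᵐ x ∂(volume : Measure (EuclideanSpace ℝ (Fin N))), ρ x ≤ ρ' x) →
     (∀ᵐ x ∂(volume : Measure (EuclideanSpace ℝ (Fin N))), w x ≤ wh x)) ∧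
    -- (b) L¹-bound
    ((∀ᵐ x ∂(volume : Measure (EuclideanSpace ℝ (Fin N))),
        w x - Lnu ν (fun y => φ (w y)) x = ρ x) →
     eLpNorm w 1 volume ≤ eLpNorm ρ 1 volume) :=
  stmt6_general ν φ hmono L hLip hφ0 w wh ρ ρ' hw hwh hρ
end
end

section
/- Let ν be a nonnegative finite symmetric Borel measure on ℝ^N, and let φ : ℝ → ℝ be nondecreasing and locally Lipschitz. Let w, ρ ∈ L^∞(ℝ^N) and suppose w satisfies w(x) − L^ν[φ∘w](x) = ρ(x) for Lebesgue-a.e. x ∈ ℝ^N. Then ‖w‖_{L^∞(ℝ^N)} ≤ ‖ρ‖_{L^∞(ℝ^N)}. -/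
/-!
Let `M` be the essential supremum of `w`. By translation invariance of Lebesgue measure and
Fubini, for a.e. `x` we have `w (x + z) ≤ M` for `ν`-a.e. `z`. Picking such an `x` with
`w x > M - ε`, monotonicity of `φ` bounds the Lévy term by `ν(ℝᴺ) (φ M - φ (M - ε))`, so
`M - ε ≤ ‖ρ‖∞ + ν(ℝᴺ) (φ M - φ (M - ε))`; letting `ε → 0` and using continuity of `φ` gives
`M ≤ ‖ρ‖∞`. The lower bound follows by applying this to `-w`, which solves the same equation
with `-ρ` and the nondecreasing nonlinearity `t ↦ -φ (-t)`.
-/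

open MeasureTheory ENNReal
open scoped ENNReal NNReal

noncomputable section

open Filter Topology

theorem ae_ae_add_of_ae_s7 {G : Type*} [MeasurableSpace G] [AddCommGroup G] [MeasurableAdd₂ G]
    {μ ν : Measure G} [SFinite μ] [SFinite ν] [μ.IsAddLeftInvariant] {p : G → Prop}
    (h : ∀ᵐ x ∂μ, p x) : ∀ᵐ x ∂μ, ∀ᵐ z ∂ν, p (x + z) := by
  simpa only [add_comm] using Measure.ae_ae_of_ae_prod ((quasiMeasurePreserving_add_swap μ ν).ae h)

theorem MeasureTheory.MemLp.isBoundedUnder_le_and_ge {α : Type*} [MeasurableSpace α]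
    {μ : Measure α} {f : α → ℝ} (hf : MemLp f ∞ μ) :
    IsBoundedUnder (· ≤ ·) (ae μ) f ∧ IsBoundedUnder (· ≥ ·) (ae μ) f := by
  have hbound := ae_le_lpNorm_exponent_top hf
  exact ⟨⟨_, hbound.mono fun x hx => (abs_le.mp hx).2⟩,
    ⟨-lpNorm f ∞ μ, hbound.mono fun x hx => (abs_le.mp hx).1⟩⟩

theorem le_of_forall_pos_sub_le_add_mul {φ : ℝ → ℝ} {M R c : ℝ} (hφ : ContinuousAt φ M)
    (h : ∀ ε > 0, M - ε ≤ R + c * (φ M - φ (M - ε))) : M ≤ R := by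
  have hlim : Tendsto (fun ε => R + c * (φ M - φ (M - ε)) + ε) (𝓝[>] 0) (𝓝 R) := by
    have hcont : ContinuousAt (fun ε => R + c * (φ M - φ (M - ε)) + ε) 0 := by
      have : ContinuousAt (fun ε => φ (M - ε)) 0 := by
        exact ContinuousAt.comp (by simpa using hφ) (by fun_prop)
      exact (continuousAt_const.add (continuousAt_const.mul (continuousAt_const.sub this))).add
        continuousAt_id
    simpa using hcont.tendsto.mono_left nhdsWithin_le_nhds
  refine ge_of_tendsto hlim ?_
  filter_upwards [self_mem_nhdsWithin] with ε hε
  linarith [h ε hε]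

variable {N : ℕ} {ν : Measure (EuclideanSpace ℝ (Fin N))}

theorem Lnu_neg (ψ : EuclideanSpace ℝ (Fin N) → ℝ) (x : EuclideanSpace ℝ (Fin N)) :
    Lnu ν (fun y => -ψ y) x = -Lnu ν ψ x := by
  simp only [Lnu, ← integral_neg, neg_sub_neg, neg_sub]

theorem Lnu_le_of_ae_le [IsFiniteMeasure ν] {ψ : EuclideanSpace ℝ (Fin N) → ℝ}
    {x : EuclideanSpace ℝ (Fin N)} {C : ℝ} (hC : 0 ≤ C) (h : ∀ᵐ z ∂ν, ψ (x + z) - ψ x ≤ C) :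
    Lnu ν ψ x ≤ ν.real Set.univ * C := by
  by_cases hint : Integrable (fun z => ψ (x + z) - ψ x) ν
  · simpa [Lnu] using integral_mono_ae hint (integrable_const C) h
  · rw [Lnu, integral_undef hint]
    positivity

theorem Lnu_comp_le [IsFiniteMeasure ν] {φ : ℝ → ℝ} (hφ : Monotone φ)
    {w : EuclideanSpace ℝ (Fin N) → ℝ} {x : EuclideanSpace ℝ (Fin N)} {a b : ℝ}
    (hab : a ≤ b) (hx : a ≤ w x) (h : ∀ᵐ z ∂ν, w (x + z) ≤ b) :
    Lnu ν (fun y => φ (w y)) x ≤ ν.real Set.univ * (φ b - φ a) := by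
  refine Lnu_le_of_ae_le (sub_nonneg.mpr (hφ hab)) (h.mono fun z hz => ?_)
  linarith [hφ hz, hφ hx]

theorem ae_le_of_sub_Lnu_eq [IsFiniteMeasure ν] {μ : Measure (EuclideanSpace ℝ (Fin N))}
    [SFinite μ] [μ.IsAddLeftInvariant] [NeZero μ] {φ : ℝ → ℝ} (hmono : Monotone φ)
    (hcont : Continuous φ) {w ρ : EuclideanSpace ℝ (Fin N) → ℝ} (hw : MemLp w ∞ μ) {R : ℝ}
    (hρ : ∀ᵐ x ∂μ, ρ x ≤ R) (heq : ∀ᵐ x ∂μ, w x - Lnu ν (fun y => φ (w y)) x = ρ x) :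
    ∀ᵐ x ∂μ, w x ≤ R := by
  obtain ⟨hbddAbove, hbddBelow⟩ := hw.isBoundedUnder_le_and_ge
  let M := essSup w μ
  have hM : ∀ᵐ x ∂μ, w x ≤ M := ae_le_essSup hbddAbove
  have hshift : ∀ᵐ x ∂μ, ∀ᵐ z ∂ν, w (x + z) ≤ M :=
    ae_ae_add_of_ae_s7 (p := fun y => w y ≤ M) hM
  have key : ∀ ε > 0, M - ε ≤ R + ν.real Set.univ * (φ M - φ (M - ε)) := by
    intro ε hε
    have hfreq : ∃ᶠ x in ae μ, M - ε < w x :=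
      frequently_lt_of_lt_limsup hbddBelow.isCobounded_flip (show M - ε < M by linarith)
    obtain ⟨x, hx, heqx, hρx, hshiftx⟩ :=
      (hfreq.and_eventually (heq.and (hρ.and hshift))).exists
    have hL := Lnu_comp_le hmono (by linarith) hx.le hshiftx
    linarith
  filter_upwards [hM] with x hx
  exact hx.trans (le_of_forall_pos_sub_le_add_mul hcont.continuousAt key)

theorem ae_abs_le_of_sub_Lnu_eq [IsFiniteMeasure ν] {μ : Measure (EuclideanSpace ℝ (Fin N))}
    [SFinite μ] [μ.IsAddLeftInvariant] [NeZero μ] {φ : ℝ → ℝ} (hmono : Monotone φ)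
    (hcont : Continuous φ) {w ρ : EuclideanSpace ℝ (Fin N) → ℝ} (hw : MemLp w ∞ μ) {R : ℝ}
    (hρ : ∀ᵐ x ∂μ, |ρ x| ≤ R) (heq : ∀ᵐ x ∂μ, w x - Lnu ν (fun y => φ (w y)) x = ρ x) :
    ∀ᵐ x ∂μ, |w x| ≤ R := by
  have hupper := ae_le_of_sub_Lnu_eq hmono hcont hw (hρ.mono fun x hx => (abs_le.mp hx).2) heq
  have hlower := ae_le_of_sub_Lnu_eq (φ := fun t => -φ (-t)) (ρ := -ρ)
    (fun a b hab => neg_le_neg (hmono (neg_le_neg hab))) (by fun_prop) hw.neg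
    (hρ.mono fun x hx => by simp only [Pi.neg_apply]; linarith [(abs_le.mp hx).1])
    (heq.mono fun x hx => by simp only [Pi.neg_apply, neg_neg, Lnu_neg]; linarith)
  filter_upwards [hupper, hlower] with x hup hlo
  exact abs_le.mpr ⟨by simpa [neg_le] using hlo, hup⟩

theorem stmt7_general {N : ℕ}
    (ν : Measure (EuclideanSpace ℝ (Fin N))) [IsFiniteMeasure ν]
    (φ : ℝ → ℝ) (hmono : Monotone φ) (hLip : LocallyLipschitz φ)
    (w ρ : EuclideanSpace ℝ (Fin N) → ℝ)
    (hw : MemLp w ∞ volume) (hρ : MemLp ρ ∞ volume)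
    (heq : ∀ᵐ x ∂(volume : Measure (EuclideanSpace ℝ (Fin N))),
      w x - Lnu ν (fun y => φ (w y)) x = ρ x) :
    eLpNorm w ∞ volume ≤ eLpNorm ρ ∞ volume := by
  have hw_le : ∀ᵐ x ∂volume, ‖w x‖ ≤ lpNorm ρ ∞ volume :=
    ae_abs_le_of_sub_Lnu_eq hmono hLip.continuous hw (ae_le_lpNorm_exponent_top hρ) heq
  calc eLpNorm w ∞ volume = eLpNormEssSup w volume := eLpNorm_exponent_top
    _ ≤ ENNReal.ofReal (lpNorm ρ ∞ volume) := eLpNormEssSup_le_of_ae_bound hw_le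
    _ = eLpNorm ρ ∞ volume := ofReal_lpNorm hρ

theorem stmt7 {N : ℕ} (hN : 1 ≤ N)
    (ν : Measure (EuclideanSpace ℝ (Fin N))) [IsFiniteMeasure ν]
    (hsym : ν.map (fun z => -z) = ν)
    (φ : ℝ → ℝ) (hmono : Monotone φ) (hLip : LocallyLipschitz φ)
    (w ρ : EuclideanSpace ℝ (Fin N) → ℝ)
    (hw : MemLp w ∞ volume) (hρ : MemLp ρ ∞ volume)
    (heq : ∀ᵐ x ∂(volume : Measure (EuclideanSpace ℝ (Fin N))),
      w x - Lnu ν (fun y => φ (w y)) x = ρ x) :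
    eLpNorm w ∞ volume ≤ eLpNorm ρ ∞ volume :=
  stmt7_general ν φ hmono hLip w ρ hw hρ heq
end
end
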